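/- arXiv:2111.08734 — 3 statements merged into one kernel-verified Lean document; each statement's English description precedes it below -/
import Mathlib

section
/- Every controlled invariant set I' contained in S satisfies I' ⊆ I_i for every i ∈ ℕ, where (I_i) is the iteration I₀ = S, I_{i+1} = I₀ ∩ P(I_i). Consequently every controlled invariant subset of S is contained in the intersection ⋂_{i∈ℕ} I_i. -/
/-- The one-step controllable predecessor operator. -/
def ctrlPre {α β γ : Type*} (U : Set β) (W : Set γ)
    (f : α → β → γ → α) (I : Set α) : Set α :=
  {x | ∃ u ∈ U, ∀ w ∈ W, f x u w ∈ I}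

/-- every controlled invariant set `I' ⊆ S` is contained in each
iterate `I_i`, hence in the intersection `⋂ i, I_i`. -/
theorem controlled_invariant_subset_iterates
    {α β γ : Type*} (U : Set β) (W : Set γ) (S : Set α)
    (f : α → β → γ → α) (Iseq : ℕ → Set α)
    (h0 : Iseq 0 = S)
    (hstep : ∀ i, Iseq (i + 1) = Iseq 0 ∩ ctrlPre U W f (Iseq i))
    (I' : Set α) (hI'S : I' ⊆ S)
    (hinv : ∀ x ∈ I', ∃ u ∈ U, ∀ w ∈ W, f x u w ∈ I') :
    (∀ i, I' ⊆ Iseq i) ∧ I' ⊆ ⋂ i, Iseq i := by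
  have key : ∀ i, I' ⊆ Iseq i := by
    intro i
    induction i with
    | zero => rw [h0]; exact hI'S
    | succ n ih =>
      rw [hstep n, h0]
      intro x hx
      refine ⟨hI'S hx, ?_⟩
      obtain ⟨u, hu, hw⟩ := hinv x hx
      exact ⟨u, hu, fun w hwW => ih (hw w hwW)⟩
  exact ⟨key, Set.subset_iInter key⟩
end

section
/- Let S ⊆ ℝⁿ be compact, U ⊆ ℝᵐ be compact, W ⊆ ℝⁿ arbitrary, and f(x,u,w) = Ax + Bu + w for matrices A ∈ ℝ^{n×n}, B ∈ ℝ^{n×m}. Then the one-step backward reachable set P(S) = {x ∈ ℝⁿ | ∃ u ∈ U, ∀ w ∈ W, Ax + Bu + w ∈ S} is closed. -/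
open Matrix

/-- for `f(x,u,w) = Ax + Bu + w`, with `S` and `U` compact and
`W` arbitrary, the one-step backward reachable set
`P(S) = {x | ∃ u ∈ U, ∀ w ∈ W, Ax + Bu + w ∈ S}` is closed. -/
theorem backward_reachable_set_isClosed
    {n m : ℕ} (A : Matrix (Fin n) (Fin n) ℝ) (B : Matrix (Fin n) (Fin m) ℝ)
    (S : Set (Fin n → ℝ)) (U : Set (Fin m → ℝ)) (W : Set (Fin n → ℝ))
    (hS : IsCompact S) (hU : IsCompact U) :
    IsClosed {x : Fin n → ℝ |
      ∃ u ∈ U, ∀ w ∈ W, A.mulVec x + B.mulVec u + w ∈ S} := by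
  rw [← isSeqClosed_iff_isClosed]
  intro xs x hmem hx
  choose u hu hSmem using hmem
  obtain ⟨u₀, hu₀, φ, hφ, hconv⟩ := hU.isSeqCompact hu
  refine ⟨u₀, hu₀, fun w hw => ?_⟩
  have hA : Continuous fun v : Fin n → ℝ => A.mulVec v := by
    exact (Matrix.mulVecLin A).continuous_of_finiteDimensional
  have hB : Continuous fun v : Fin m → ℝ => B.mulVec v := by
    exact (Matrix.mulVecLin B).continuous_of_finiteDimensional
  have htend : Filter.Tendsto
      (fun k => A.mulVec (xs (φ k)) + B.mulVec (u (φ k)) + w) Filter.atTop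
      (nhds (A.mulVec x + B.mulVec u₀ + w)) := by
    exact (((hA.tendsto x).comp (hx.comp hφ.tendsto_atTop)).add
      ((hB.tendsto u₀).comp hconv)).add tendsto_const_nhds
  exact hS.isClosed.mem_of_tendsto htend
    (Filter.Eventually.of_forall fun k => hSmem (φ k) w hw)
end

section
/- Let A ∈ ℝ^{n×n}, B ∈ ℝ^{n×m} with (A,B) controllable. Then there exist constants c_x, c_u > 0 such that for all x ∈ ℝⁿ there exists a control sequence ν(0), …, ν(n−1) with |ν(k)|_∞ ≤ c_u |x|_∞ for all k, whose closed-loop trajectory ξ(0) = x, ξ(k+1) = Aξ(k) + Bν(k) satisfies ξ(n) = 0 and |ξ(k)|_∞ ≤ c_x |x|_∞ for all k ∈ [0,n]. -/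
open Matrix

/-- The controllability matrix `[B | AB | ⋯ | A^{n-1}B]` of the pair `(A,B)`,
with columns indexed by `Fin n × Fin m`. -/
def ctrbMatrix {n m : ℕ} (A : Matrix (Fin n) (Fin n) ℝ)
    (B : Matrix (Fin n) (Fin m) ℝ) : Matrix (Fin n) (Fin n × Fin m) ℝ :=
  fun i p => (A ^ (p.1 : ℕ) * B) i p.2

/-- if `(A,B)` is controllable, there exist constants
`c_x, c_u > 0` such that every `x` can be steered to the origin in `n` steps
with inputs bounded by `c_u‖x‖∞` and trajectory bounded by `c_x‖x‖∞`
(the norm on the `Pi` types `Fin k → ℝ` is the infinity norm). -/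
theorem controllable_bounded_null_control
    {n m : ℕ} (A : Matrix (Fin n) (Fin n) ℝ) (B : Matrix (Fin n) (Fin m) ℝ)
    (hctrb : (ctrbMatrix A B).rank = n) :
    ∃ cx > (0 : ℝ), ∃ cu > (0 : ℝ),
      ∀ x : Fin n → ℝ, ∃ ν : ℕ → (Fin m → ℝ), ∃ ξ : ℕ → (Fin n → ℝ),
        ξ 0 = x ∧
        (∀ k, ξ (k + 1) = A.mulVec (ξ k) + B.mulVec (ν k)) ∧
        ξ n = 0 ∧
        (∀ k < n, ‖ν k‖ ≤ cu * ‖x‖) ∧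
        (∀ k ≤ n, ‖ξ k‖ ≤ cx * ‖x‖) := by
  classical
  set M := (ctrbMatrix A B).mulVecLin with hMdef
  have hrange : LinearMap.range M = ⊤ := by
    apply Submodule.eq_top_of_finrank_eq
    rw [Module.finrank_fintype_fun_eq_card, Fintype.card_fin]
    exact hctrb
  obtain ⟨s, hs⟩ := M.exists_rightInverse_of_surjective hrange
  -- the linear map producing the stacked control vector
  set Z : (Fin n → ℝ) →ₗ[ℝ] (Fin n × Fin m → ℝ) :=
    -(s ∘ₗ (A ^ n).mulVecLin) with hZdef
  have hMZ : ∀ x, M (Z x) = -((A ^ n).mulVec x) := by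
    intro x
    have := LinearMap.congr_fun hs ((A ^ n).mulVec x)
    simp only [hZdef, LinearMap.neg_apply, LinearMap.comp_apply, map_neg]
    simpa [Matrix.mulVecLin_apply] using congrArg Neg.neg this
  -- control input linear maps
  set N : ℕ → ((Fin n → ℝ) →ₗ[ℝ] (Fin m → ℝ)) := fun k =>
    if h : k < n then
      (LinearMap.funLeft ℝ ℝ (fun j => ((⟨n - 1 - k, by omega⟩ : Fin n), j))) ∘ₗ Z
    else 0 with hNdef
  -- trajectory linear maps
  set X : ℕ → ((Fin n → ℝ) →ₗ[ℝ] (Fin n → ℝ)) := fun k =>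
    Nat.rec LinearMap.id (fun k Xk => A.mulVecLin ∘ₗ Xk + B.mulVecLin ∘ₗ N k) k with hXdef
  have hX0 : X 0 = LinearMap.id := rfl
  have hXsucc : ∀ k, X (k + 1) = A.mulVecLin ∘ₗ X k + B.mulVecLin ∘ₗ N k := fun k => rfl
  -- operator norm constants
  let C : ∀ {E F : Type} [NormedAddCommGroup E] [NormedAddCommGroup F]
      [NormedSpace ℝ E] [NormedSpace ℝ F] [FiniteDimensional ℝ E],
      (E →ₗ[ℝ] F) → ℝ := fun f => ‖LinearMap.toContinuousLinearMap f‖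
  have hC : ∀ {E F : Type} [NormedAddCommGroup E] [NormedAddCommGroup F]
      [NormedSpace ℝ E] [NormedSpace ℝ F] [FiniteDimensional ℝ E]
      (f : E →ₗ[ℝ] F) (x : E), ‖f x‖ ≤ C f * ‖x‖ := by
    intro E F _ _ _ _ _ f x
    exact (LinearMap.toContinuousLinearMap f).le_opNorm x
  have hCnn : ∀ {E F : Type} [NormedAddCommGroup E] [NormedAddCommGroup F]
      [NormedSpace ℝ E] [NormedSpace ℝ F] [FiniteDimensional ℝ E]
      (f : E →ₗ[ℝ] F), 0 ≤ C f := by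
    intro E F _ _ _ _ _ f
    exact norm_nonneg _
  refine ⟨1 + ∑ k ∈ Finset.range (n + 1), C (X k), by positivity,
    1 + ∑ k ∈ Finset.range n, C (N k), by positivity, fun x => ?_⟩
  refine ⟨fun k => N k x, fun k => X k x, rfl, fun k => by
    simp [hXsucc k, Matrix.mulVecLin_apply], ?_, ?_, ?_⟩
  · -- ξ n = 0
    set ζ := Z x with hζ
    have key : ∀ k, X k x = (A ^ k).mulVec x
        + ∑ j ∈ Finset.range k, (A ^ (k - 1 - j)).mulVec (B.mulVec (N j x)) := by
      intro k
      induction k with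
      | zero => simp [hX0]
      | succ k ih =>
        rw [hXsucc k]
        simp only [LinearMap.add_apply, LinearMap.comp_apply, Matrix.mulVecLin_apply, ih]
        have hA : A *ᵥ (A ^ k *ᵥ x) = A ^ (k + 1) *ᵥ x := by
          rw [Matrix.mulVec_mulVec, ← pow_succ']
        have hsum : A *ᵥ (∑ j ∈ Finset.range k, A ^ (k - 1 - j) *ᵥ B *ᵥ (N j) x)
            = ∑ j ∈ Finset.range k, A ^ (k - j) *ᵥ B *ᵥ (N j) x := by
          rw [← Matrix.mulVecLin_apply, map_sum]
          refine Finset.sum_congr rfl fun j hj => ?_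
          have hj' := Finset.mem_range.mp hj
          have he : k - j = (k - 1 - j) + 1 := by omega
          rw [Matrix.mulVecLin_apply, Matrix.mulVec_mulVec, he, pow_succ']
        rw [Finset.sum_range_succ, Matrix.mulVec_add, hA, hsum]
        have h1 : ∀ j ∈ Finset.range k, A ^ (k + 1 - 1 - j) *ᵥ B *ᵥ (N j) x
            = A ^ (k - j) *ᵥ B *ᵥ (N j) x := by
          intro j hj; norm_num
        rw [Finset.sum_congr rfl h1]
        have h2 : A ^ (k + 1 - 1 - k) *ᵥ B *ᵥ (N k) x = B *ᵥ (N k) x := by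
          simp
        rw [h2]
        abel
    set g : ℕ → (Fin n → ℝ) := fun p =>
      if h : p < n then (A ^ p * B) *ᵥ (fun i => ζ (⟨p, h⟩, i)) else 0 with hg
    have hterm : ∀ j ∈ Finset.range n,
        A ^ (n - 1 - j) *ᵥ B *ᵥ (N j) x = g (n - 1 - j) := by
      intro j hj
      have hj' := Finset.mem_range.mp hj
      have hlt : n - 1 - j < n := by omega
      rw [hg]
      simp only [hlt, dif_pos]
      rw [Matrix.mulVec_mulVec]
      simp only [hNdef, hj', dif_pos, LinearMap.comp_apply,
        LinearMap.funLeft_apply]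
      rfl
    have hsum_eq : ∑ p ∈ Finset.range n, g p = M ζ := by
      funext i
      rw [Finset.sum_apply, ← Fin.sum_univ_eq_sum_range]
      simp only [hMdef, Matrix.mulVecLin_apply, Matrix.mulVec, dotProduct]
      rw [Fintype.sum_prod_type]
      refine Finset.sum_congr rfl fun a _ => ?_
      simp [hg, a.isLt, Matrix.mulVec, dotProduct, ctrbMatrix]
    have final : X n x = 0 := by
      rw [key n, Finset.sum_congr rfl hterm, Finset.sum_range_reflect, hsum_eq,
        hMZ x]
      simp
    exact final
  · -- input bound
    intro k hk
    have h1 : ‖N k x‖ ≤ C (N k) * ‖x‖ := hC _ _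
    have h2 : C (N k) ≤ 1 + ∑ j ∈ Finset.range n, C (N j) := by
      have := Finset.single_le_sum (f := fun j => C (N j))
        (s := Finset.range n) (fun j _ => hCnn _) (Finset.mem_range.mpr hk)
      linarith
    exact h1.trans (mul_le_mul_of_nonneg_right h2 (norm_nonneg x))
  · -- trajectory bound
    intro k hk
    have h1 : ‖X k x‖ ≤ C (X k) * ‖x‖ := hC _ _
    have h2 : C (X k) ≤ 1 + ∑ j ∈ Finset.range (n + 1), C (X j) := by
      have := Finset.single_le_sum (f := fun j => C (X j))
        (s := Finset.range (n + 1)) (fun j _ => hCnn _)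
        (Finset.mem_range.mpr (Nat.lt_succ_of_le hk))
      linarith
    exact h1.trans (mul_le_mul_of_nonneg_right h2 (norm_nonneg x))
end
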